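/- Let R be an algebraic curvature tensor on a Euclidean space of dimension n ≥ 4 and e_1,…,e_4 orthonormal. With the nine tensors φ_1,…,φ_9 as above, the following identity holds: 6(R̊(φ_1,φ_1)+R̊(φ_5,φ_5)+R̊(φ_6,φ_6)) + (3/2)(R̊(φ_2,φ_2)+R̊(φ_3,φ_3)+R̊(φ_4,φ_4)+R̊(φ_7,φ_7)+R̊(φ_8,φ_8)+R̊(φ_9,φ_9)) = 27(R_{1313}+R_{1414}+R_{2323}+R_{2424}) − 54 R_{1234}. -/
import Mathlib


open scoped BigOperators

/-- The symmetric product `u ⊙ v = u ⊗ v + v ⊗ u`, as a matrix in standard coordinates. -/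
def sym2 {n : ℕ} (u v : Fin n → ℝ) : Matrix (Fin n) (Fin n) ℝ :=
  Matrix.of fun i j => u i * v j + v i * u j

/-- The inner product `⟨A, B⟩ = tr(Aᵀ B)` on two-tensors. -/
def minner {n : ℕ} (A B : Matrix (Fin n) (Fin n) ℝ) : ℝ :=
  ∑ i, ∑ j, A i j * B i j

/-- The curvature operator of the second kind as a bilinear form on symmetric two-tensors:
`R̊(h₁,h₂) = Σ R_{iklj} (h₁)_{ij} (h₂)_{kl}`. -/
def Rsec {n : ℕ} (R : Fin n → Fin n → Fin n → Fin n → ℝ)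
    (h₁ h₂ : Matrix (Fin n) (Fin n) ℝ) : ℝ :=
  ∑ i, ∑ j, ∑ k, ∑ l, R i k l j * h₁ i j * h₂ k l

/-- Multilinear evaluation of the curvature tensor on vectors. -/
def Rap {n : ℕ} (R : Fin n → Fin n → Fin n → Fin n → ℝ) (u v w x : Fin n → ℝ) : ℝ :=
  ∑ i, ∑ j, ∑ k, ∑ l, R i j k l * u i * v j * w k * x l

/-- An algebraic curvature tensor: antisymmetric in each pair, symmetric in pairs,
first Bianchi identity. -/
def IsAlgCurv {n : ℕ} (R : Fin n → Fin n → Fin n → Fin n → ℝ) : Prop :=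
  (∀ i j k l, R i j k l = - R j i k l) ∧ (∀ i j k l, R i j k l = - R i j l k) ∧
  (∀ i j k l, R i j k l = R k l i j) ∧
  (∀ i j k l, R i j k l + R i k l j + R i l j k = 0)

/-- An orthonormal family of vectors in Euclidean space. -/
def OrthonormalFam {n m : ℕ} (v : Fin m → Fin n → ℝ) : Prop :=
  ∀ a b, (∑ k, v a k * v b k) = if a = b then (1 : ℝ) else 0

/-- The nine symmetric two-tensors `φ₁,…,φ₉` built from an orthonormal four-frame. -/
noncomputable def phi9 {n : ℕ} (e : Fin 4 → Fin n → ℝ) : Fin 9 → Matrix (Fin n) (Fin n) ℝ :=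
  ![ (1/2 : ℝ) • (sym2 (e 0) (e 0) + sym2 (e 1) (e 1) - sym2 (e 2) (e 2) - sym2 (e 3) (e 3)),
     (1/2 : ℝ) • (sym2 (e 0) (e 0) - sym2 (e 1) (e 1) + sym2 (e 2) (e 2) - sym2 (e 3) (e 3)),
     (1/2 : ℝ) • (sym2 (e 0) (e 0) - sym2 (e 1) (e 1) - sym2 (e 2) (e 2) + sym2 (e 3) (e 3)),
     sym2 (e 0) (e 3) + sym2 (e 1) (e 2),
     sym2 (e 0) (e 3) - sym2 (e 1) (e 2),
     sym2 (e 0) (e 2) + sym2 (e 1) (e 3),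
     sym2 (e 0) (e 2) - sym2 (e 1) (e 3),
     sym2 (e 0) (e 1) + sym2 (e 2) (e 3),
     sym2 (e 0) (e 1) - sym2 (e 2) (e 3) ]
section auxlemmas

variable {n : ℕ}

lemma sum_rot3 {M : Type*} [AddCommMonoid M] (g : Fin n → Fin n → Fin n → M) :
    (∑ j, ∑ k, ∑ l, g j k l) = ∑ k, ∑ l, ∑ j, g j k l := by
  rw [Finset.sum_comm]
  exact Finset.sum_congr rfl fun k _ => Finset.sum_comm

lemma rap_reorder (R : Fin n → Fin n → Fin n → Fin n → ℝ) (u v w x : Fin n → ℝ) :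
    Rap R u w x v = ∑ i, ∑ j, ∑ k, ∑ l, R i k l j * u i * v j * w k * x l := by
  unfold Rap
  refine Finset.sum_congr rfl fun i _ => ?_
  rw [sum_rot3, sum_rot3]
  exact Finset.sum_congr rfl fun _ _ => Finset.sum_congr rfl fun _ _ =>
    Finset.sum_congr rfl fun _ _ => by ring

lemma rap_reorder2 (R : Fin n → Fin n → Fin n → Fin n → ℝ) (u v w x : Fin n → ℝ) :
    Rap R u x v w = ∑ i, ∑ j, ∑ k, ∑ l, R i l j k * u i * v j * w k * x l := by
  unfold Rap
  refine Finset.sum_congr rfl fun i _ => ?_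
  rw [sum_rot3]
  exact Finset.sum_congr rfl fun _ _ => Finset.sum_congr rfl fun _ _ =>
    Finset.sum_congr rfl fun _ _ => by ring

lemma ranti1 (R : Fin n → Fin n → Fin n → Fin n → ℝ) (hR : IsAlgCurv R)
    (u v w x : Fin n → ℝ) : Rap R u v w x = - Rap R v u w x := by
  unfold Rap
  simp only [← Finset.sum_neg_distrib]
  rw [Finset.sum_comm]
  refine Finset.sum_congr rfl fun i _ => Finset.sum_congr rfl fun j _ =>
    Finset.sum_congr rfl fun k _ => Finset.sum_congr rfl fun l _ => ?_
  rw [hR.1 j i k l]; ring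

lemma ranti2 (R : Fin n → Fin n → Fin n → Fin n → ℝ) (hR : IsAlgCurv R)
    (u v w x : Fin n → ℝ) : Rap R u v w x = - Rap R u v x w := by
  unfold Rap
  simp only [← Finset.sum_neg_distrib]
  refine Finset.sum_congr rfl fun i _ => Finset.sum_congr rfl fun j _ => ?_
  rw [Finset.sum_comm]
  refine Finset.sum_congr rfl fun k _ => Finset.sum_congr rfl fun l _ => ?_
  rw [hR.2.1 i j l k]; ring

lemma rpair (R : Fin n → Fin n → Fin n → Fin n → ℝ) (hR : IsAlgCurv R)
    (u v w x : Fin n → ℝ) : Rap R u v w x = Rap R w x u v := by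
  unfold Rap
  have h1 : (∑ i, ∑ j, ∑ k, ∑ l, R i j k l * u i * v j * w k * x l)
      = ∑ i, ∑ k, ∑ l, ∑ j, R i j k l * u i * v j * w k * x l :=
    Finset.sum_congr rfl fun i _ => sum_rot3 _
  have h2 : (∑ i, ∑ k, ∑ l, ∑ j, R i j k l * u i * v j * w k * x l)
      = ∑ k, ∑ l, ∑ i, ∑ j, R i j k l * u i * v j * w k * x l :=
    sum_rot3 (fun i k l => ∑ j, R i j k l * u i * v j * w k * x l)
  rw [h1, h2]
  refine Finset.sum_congr rfl fun a _ => Finset.sum_congr rfl fun b _ =>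
    Finset.sum_congr rfl fun c _ => Finset.sum_congr rfl fun d _ => ?_
  rw [hR.2.2.1 c d a b]; ring

lemma rbianchi (R : Fin n → Fin n → Fin n → Fin n → ℝ) (hR : IsAlgCurv R)
    (u v w x : Fin n → ℝ) : Rap R u v w x + Rap R u w x v + Rap R u x v w = 0 := by
  rw [rap_reorder R u v w x, rap_reorder2 R u v w x, Rap]
  simp only [← Finset.sum_add_distrib]
  refine Finset.sum_eq_zero fun i _ => Finset.sum_eq_zero fun j _ =>
    Finset.sum_eq_zero fun k _ => Finset.sum_eq_zero fun l _ => ?_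
  linear_combination (u i * v j * w k * x l) * hR.2.2.2 i j k l

lemma rsec_sym2 (R : Fin n → Fin n → Fin n → Fin n → ℝ) (a b c d : Fin n → ℝ) :
    Rsec R (sym2 a b) (sym2 c d)
      = Rap R a c d b + Rap R a d c b + Rap R b c d a + Rap R b d c a := by
  rw [rap_reorder R a b c d, rap_reorder R a b d c, rap_reorder R b a c d,
    rap_reorder R b a d c]
  simp only [Rsec, sym2, Matrix.of_apply, ← Finset.sum_add_distrib]
  exact Finset.sum_congr rfl fun _ _ => Finset.sum_congr rfl fun _ _ =>
    Finset.sum_congr rfl fun _ _ => Finset.sum_congr rfl fun _ _ => by ring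

lemma Rsec_add_left (R : Fin n → Fin n → Fin n → Fin n → ℝ)
    (A B C : Matrix (Fin n) (Fin n) ℝ) : Rsec R (A + B) C = Rsec R A C + Rsec R B C := by
  simp only [Rsec, Matrix.add_apply, ← Finset.sum_add_distrib]
  exact Finset.sum_congr rfl fun _ _ => Finset.sum_congr rfl fun _ _ =>
    Finset.sum_congr rfl fun _ _ => Finset.sum_congr rfl fun _ _ => by ring

lemma Rsec_sub_left (R : Fin n → Fin n → Fin n → Fin n → ℝ)
    (A B C : Matrix (Fin n) (Fin n) ℝ) : Rsec R (A - B) C = Rsec R A C - Rsec R B C := by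
  simp only [Rsec, Matrix.sub_apply, ← Finset.sum_sub_distrib]
  exact Finset.sum_congr rfl fun _ _ => Finset.sum_congr rfl fun _ _ =>
    Finset.sum_congr rfl fun _ _ => Finset.sum_congr rfl fun _ _ => by ring

lemma Rsec_smul_left (R : Fin n → Fin n → Fin n → Fin n → ℝ) (c : ℝ)
    (A B : Matrix (Fin n) (Fin n) ℝ) : Rsec R (c • A) B = c * Rsec R A B := by
  simp only [Rsec, Matrix.smul_apply, smul_eq_mul, Finset.mul_sum]
  exact Finset.sum_congr rfl fun _ _ => Finset.sum_congr rfl fun _ _ =>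
    Finset.sum_congr rfl fun _ _ => Finset.sum_congr rfl fun _ _ => by ring

lemma Rsec_add_right (R : Fin n → Fin n → Fin n → Fin n → ℝ)
    (A B C : Matrix (Fin n) (Fin n) ℝ) : Rsec R A (B + C) = Rsec R A B + Rsec R A C := by
  simp only [Rsec, Matrix.add_apply, ← Finset.sum_add_distrib]
  exact Finset.sum_congr rfl fun _ _ => Finset.sum_congr rfl fun _ _ =>
    Finset.sum_congr rfl fun _ _ => Finset.sum_congr rfl fun _ _ => by ring

lemma Rsec_sub_right (R : Fin n → Fin n → Fin n → Fin n → ℝ)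
    (A B C : Matrix (Fin n) (Fin n) ℝ) : Rsec R A (B - C) = Rsec R A B - Rsec R A C := by
  simp only [Rsec, Matrix.sub_apply, ← Finset.sum_sub_distrib]
  exact Finset.sum_congr rfl fun _ _ => Finset.sum_congr rfl fun _ _ =>
    Finset.sum_congr rfl fun _ _ => Finset.sum_congr rfl fun _ _ => by ring

lemma Rsec_smul_right (R : Fin n → Fin n → Fin n → Fin n → ℝ) (c : ℝ)
    (A B : Matrix (Fin n) (Fin n) ℝ) : Rsec R A (c • B) = c * Rsec R A B := by
  simp only [Rsec, Matrix.smul_apply, smul_eq_mul, Finset.mul_sum]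
  exact Finset.sum_congr rfl fun _ _ => Finset.sum_congr rfl fun _ _ =>
    Finset.sum_congr rfl fun _ _ => Finset.sum_congr rfl fun _ _ => by ring

end auxlemmas

/-- the weighted combination identity
`6(R̊(φ₁,φ₁)+R̊(φ₅,φ₅)+R̊(φ₆,φ₆)) + (3/2)(R̊(φ₂,φ₂)+R̊(φ₃,φ₃)+R̊(φ₄,φ₄)+R̊(φ₇,φ₇)+R̊(φ₈,φ₈)+R̊(φ₉,φ₉))
 = 27(R₁₃₁₃+R₁₄₁₄+R₂₃₂₃+R₂₄₂₄) − 54 R₁₂₃₄`. -/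
theorem statement_4 (n : ℕ) (hn : 4 ≤ n)
    (R : Fin n → Fin n → Fin n → Fin n → ℝ) (hR : IsAlgCurv R)
    (e : Fin 4 → Fin n → ℝ) (he : OrthonormalFam e) :
    6 * (Rsec R (phi9 e 0) (phi9 e 0) + Rsec R (phi9 e 4) (phi9 e 4)
        + Rsec R (phi9 e 5) (phi9 e 5))
      + (3/2) * (Rsec R (phi9 e 1) (phi9 e 1) + Rsec R (phi9 e 2) (phi9 e 2)
        + Rsec R (phi9 e 3) (phi9 e 3) + Rsec R (phi9 e 6) (phi9 e 6)
        + Rsec R (phi9 e 7) (phi9 e 7) + Rsec R (phi9 e 8) (phi9 e 8)) =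
    27 * (Rap R (e 0) (e 2) (e 0) (e 2) + Rap R (e 0) (e 3) (e 0) (e 3)
        + Rap R (e 1) (e 2) (e 1) (e 2) + Rap R (e 1) (e 3) (e 1) (e 3))
      - 54 * Rap R (e 0) (e 1) (e 2) (e 3) := by

  have p0 : phi9 e 0 = (1/2 : ℝ) • (sym2 (e 0) (e 0) + sym2 (e 1) (e 1) - sym2 (e 2) (e 2) - sym2 (e 3) (e 3)) := rfl
  have p1 : phi9 e 1 = (1/2 : ℝ) • (sym2 (e 0) (e 0) - sym2 (e 1) (e 1) + sym2 (e 2) (e 2) - sym2 (e 3) (e 3)) := rfl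
  have p2 : phi9 e 2 = (1/2 : ℝ) • (sym2 (e 0) (e 0) - sym2 (e 1) (e 1) - sym2 (e 2) (e 2) + sym2 (e 3) (e 3)) := rfl
  have p3 : phi9 e 3 = sym2 (e 0) (e 3) + sym2 (e 1) (e 2) := rfl
  have p4 : phi9 e 4 = sym2 (e 0) (e 3) - sym2 (e 1) (e 2) := rfl
  have p5 : phi9 e 5 = sym2 (e 0) (e 2) + sym2 (e 1) (e 3) := rfl
  have p6 : phi9 e 6 = sym2 (e 0) (e 2) - sym2 (e 1) (e 3) := rfl
  have p7 : phi9 e 7 = sym2 (e 0) (e 1) + sym2 (e 2) (e 3) := rfl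
  have p8 : phi9 e 8 = sym2 (e 0) (e 1) - sym2 (e 2) (e 3) := rfl
  rw [p0, p1, p2, p3, p4, p5, p6, p7, p8]
  simp only [Rsec_smul_left, Rsec_smul_right, Rsec_add_left, Rsec_add_right,
    Rsec_sub_left, Rsec_sub_right, rsec_sym2]
  linear_combination
    (9/2 : ℝ) * (ranti1 R hR (e 0) (e 0) (e 0) (e 0)) +
          (3/1 : ℝ) * (ranti1 R hR (e 0) (e 0) (e 1) (e 1)) +
          (-3/1 : ℝ) * (rpair R hR (e 0) (e 0) (e 1) (e 1)) +
          (57/4 : ℝ) * (ranti1 R hR (e 0) (e 0) (e 2) (e 2)) +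
          (-15/2 : ℝ) * (rpair R hR (e 0) (e 0) (e 2) (e 2)) +
          (-27/2 : ℝ) * (rbianchi R hR (e 0) (e 0) (e 2) (e 2)) +
          (57/4 : ℝ) * (ranti1 R hR (e 0) (e 0) (e 3) (e 3)) +
          (-15/2 : ℝ) * (rpair R hR (e 0) (e 0) (e 3) (e 3)) +
          (-27/2 : ℝ) * (rbianchi R hR (e 0) (e 0) (e 3) (e 3)) +
          (3/1 : ℝ) * (ranti1 R hR (e 0) (e 1) (e 0) (e 1)) +
          (3/1 : ℝ) * (ranti1 R hR (e 0) (e 1) (e 1) (e 0)) +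
          (27/2 : ℝ) * (ranti1 R hR (e 0) (e 1) (e 2) (e 3)) +
          (27/1 : ℝ) * (ranti2 R hR (e 0) (e 1) (e 2) (e 3)) +
          (9/2 : ℝ) * (rpair R hR (e 0) (e 1) (e 2) (e 3)) +
          (9/2 : ℝ) * (rbianchi R hR (e 0) (e 1) (e 2) (e 3)) +
          (-27/2 : ℝ) * (ranti1 R hR (e 0) (e 1) (e 3) (e 2)) +
          (-9/2 : ℝ) * (rpair R hR (e 0) (e 1) (e 3) (e 2)) +
          (-9/2 : ℝ) * (rbianchi R hR (e 0) (e 1) (e 3) (e 2)) +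
          (-6/1 : ℝ) * (ranti1 R hR (e 0) (e 2) (e 0) (e 2)) +
          (15/2 : ℝ) * (ranti1 R hR (e 0) (e 2) (e 2) (e 0)) +
          (-9/2 : ℝ) * (ranti1 R hR (e 0) (e 2) (e 3) (e 1)) +
          (-6/1 : ℝ) * (ranti1 R hR (e 0) (e 3) (e 0) (e 3)) +
          (9/2 : ℝ) * (ranti1 R hR (e 0) (e 3) (e 2) (e 1)) +
          (15/2 : ℝ) * (ranti1 R hR (e 0) (e 3) (e 3) (e 0)) +
          (-9/2 : ℝ) * (rpair R hR (e 1) (e 0) (e 2) (e 3)) +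
          (-9/2 : ℝ) * (rbianchi R hR (e 1) (e 0) (e 2) (e 3)) +
          (9/2 : ℝ) * (rpair R hR (e 1) (e 0) (e 3) (e 2)) +
          (9/2 : ℝ) * (rbianchi R hR (e 1) (e 0) (e 3) (e 2)) +
          (9/2 : ℝ) * (ranti1 R hR (e 1) (e 1) (e 1) (e 1)) +
          (57/4 : ℝ) * (ranti1 R hR (e 1) (e 1) (e 2) (e 2)) +
          (-15/2 : ℝ) * (rpair R hR (e 1) (e 1) (e 2) (e 2)) +
          (-27/2 : ℝ) * (rbianchi R hR (e 1) (e 1) (e 2) (e 2)) +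
          (57/4 : ℝ) * (ranti1 R hR (e 1) (e 1) (e 3) (e 3)) +
          (-15/2 : ℝ) * (rpair R hR (e 1) (e 1) (e 3) (e 3)) +
          (-27/2 : ℝ) * (rbianchi R hR (e 1) (e 1) (e 3) (e 3)) +
          (-6/1 : ℝ) * (ranti1 R hR (e 1) (e 2) (e 1) (e 2)) +
          (15/2 : ℝ) * (ranti1 R hR (e 1) (e 2) (e 2) (e 1)) +
          (9/2 : ℝ) * (ranti1 R hR (e 1) (e 2) (e 3) (e 0)) +
          (-6/1 : ℝ) * (ranti1 R hR (e 1) (e 3) (e 1) (e 3)) +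
          (-9/2 : ℝ) * (ranti1 R hR (e 1) (e 3) (e 2) (e 0)) +
          (15/2 : ℝ) * (ranti1 R hR (e 1) (e 3) (e 3) (e 1)) +
          (9/2 : ℝ) * (ranti1 R hR (e 2) (e 2) (e 2) (e 2)) +
          (3/1 : ℝ) * (ranti1 R hR (e 2) (e 2) (e 3) (e 3)) +
          (-3/1 : ℝ) * (rpair R hR (e 2) (e 2) (e 3) (e 3)) +
          (3/1 : ℝ) * (ranti1 R hR (e 2) (e 3) (e 2) (e 3)) +
          (3/1 : ℝ) * (ranti1 R hR (e 2) (e 3) (e 3) (e 2)) +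
          (9/2 : ℝ) * (ranti1 R hR (e 3) (e 3) (e 3) (e 3))
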